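/- arXiv:q-alg/9710039 — 6 statements merged into one kernel-verified Lean document; each statement's English description precedes it below -/
import Mathlib

section
/- Let R be a commutative ring, let A be an associative R-algebra, and let x, y ∈ A satisfy the Jordan plane relation x·y = y·x + y·y. Then for every p ∈ R and every natural number k, the ordered product identity (x + p•y)^k = (x + (p−k+1)•y)·(x + (p−k+3)•y)·(x + (p−k+5)•y)· … ·(x + (p+k−1)•y) holds, i.e., (x + p•y)^k = ∏_{i=0}^{k−1} (x + (p − k + 1 + 2i)•y), where the factors are multiplied in order of increasing i from left to right and integers are interpreted in R via the canonical ring map ℤ → R. -/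
/-!
Writing `z q = x + q • y`, the Jordan plane relation is equivalent to the exchange rule
`z q * z r = z (r - 1) * z (q + 1)`. Pushing a factor `z q` rightwards through a product
`z r * z (r + 2) * ⋯` therefore lowers each factor it passes by `1` and raises itself by `1`
each time, and induction on `k` turns `z p * z p ^ k` into the ordered product for `k + 1`.
-/

section Exchange

variable {R M : Type*} [Ring R] [Monoid M] (f : R → M)

theorem mul_prod_range_of_exchange (hf : ∀ q r, f q * f r = f (r - 1) * f (q + 1)) (k : ℕ)
    (q r : R) :
    f q * ((List.range k).map fun i : ℕ => f (r + 2 * i)).prod =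
      ((List.range k).map fun i : ℕ => f (r - 1 + 2 * i)).prod * f (q + k) := by
  induction k generalizing q r with
  | zero => simp
  | succ k ih =>
    have hshift (s : R) (i : ℕ) : s + 2 * ((i + 1 : ℕ) : R) = s + 2 + 2 * i := by
      rw [Nat.cast_succ, mul_add_one]; abel
    simp only [List.prod_range_succ', Nat.succ_eq_add_one, hshift, Nat.cast_zero, mul_zero,
      add_zero]
    have hr : r + 2 - 1 = r - 1 + 2 := by abel
    have hq : q + 1 + (k : R) = q + (k + 1 : ℕ) := by push_cast; abel
    calc f q * (f r * ((List.range k).map fun i : ℕ => f (r + 2 + 2 * i)).prod)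
        = f (r - 1) * (f (q + 1) * ((List.range k).map fun i : ℕ => f (r + 2 + 2 * i)).prod) :=
          by rw [← mul_assoc, hf, mul_assoc]
      _ = f (r - 1) * (((List.range k).map fun i : ℕ => f (r + 2 - 1 + 2 * i)).prod *
            f (q + 1 + k)) := by rw [ih]
      _ = _ := by rw [← mul_assoc, hr, hq]

theorem pow_eq_prod_range_of_exchange (hf : ∀ q r, f q * f r = f (r - 1) * f (q + 1)) (p : R)
    (k : ℕ) :
    f p ^ k = ((List.range k).map fun i : ℕ => f (p - k + 1 + 2 * i)).prod := by
  induction k with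
  | zero => simp
  | succ k ih =>
    have hlower (i : ℕ) : p - k + 1 - 1 + 2 * (i : R) = p - (k + 1 : ℕ) + 1 + 2 * i := by
      push_cast [two_mul]; abel
    have hlast : p + (k : R) = p - (k + 1 : ℕ) + 1 + 2 * (k : ℕ) := by push_cast [two_mul]; abel
    rw [pow_succ', ih, mul_prod_range_of_exchange f hf, List.prod_range_succ]
    simp only [hlower, hlast]

end Exchange

theorem jordan_plane_exchange {R A : Type*} [CommRing R] [Ring A] [Algebra R A] {x y : A}
    (hxy : x * y = y * x + y * y) (q r : R) :
    (x + q • y) * (x + r • y) = (x + (r - 1) • y) * (x + (q + 1) • y) := by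
  simp only [add_mul, mul_add, smul_mul_assoc, mul_smul_comm, hxy]
  module

/-- Jordan plane identity: for `x y` in an associative `R`-algebra satisfying
`x * y = y * x + y * y`, we have
`(x + p • y) ^ k = ∏_{i=0}^{k-1} (x + (p - k + 1 + 2 i) • y)` with factors
multiplied from left to right in order of increasing `i`. -/
theorem jordan_plane_ordered_product_identity
    (R : Type*) (A : Type*) [CommRing R] [Ring A] [Algebra R A]
    (x y : A) (hxy : x * y = y * x + y * y) (p : R) (k : ℕ) :
    (x + p • y) ^ k =
      ((List.range k).map
        (fun (i : ℕ) => x + (p - (k : R) + 1 + 2 * (i : R)) • y)).prod :=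
  pow_eq_prod_range_of_exchange (fun q : R => x + q • y) (jordan_plane_exchange hxy) p k
end

section
/- Let R be a commutative ring, let A be an associative R-algebra, and let x, y ∈ A satisfy x·y = y·x + y·y. Then for every p ∈ R and every natural number k, (x + p•y)^k = Σ_{i=0}^{k} C(k,i)·(p·(p+1)·…·(p+i−1))•(y^i · x^{k−i}), where C(k,i) is the binomial coefficient, p·(p+1)·…·(p+i−1) denotes the rising factorial in R (equal to 1 when i = 0), and integer shifts are interpreted in R via the canonical ring map ℤ → R. -/
/-!
The Jordan relation gives `x * y ^ i = y ^ i * x + i • y ^ (i + 1)`, so left multiplication by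
`z = x + p • y` sends `y ^ i * x ^ j` to `y ^ i * x ^ (j + 1) + (p + i) • (y ^ (i + 1) * x ^ j)`.
On the rescaled monomials `e i j = (p (p+1) ⋯ (p+i-1)) • (y ^ i * x ^ j)` it therefore acts as
`e i (j + 1) + e (i + 1) j`, a sum of two commuting shifts, and Pascal's rule yields the
binomial expansion of `z ^ k = z ^ k * e 0 0`.
-/

open Finset Polynomial

section JordanPlane

variable {R A : Type*} [CommSemiring R] [Semiring A] [Algebra R A] {x y : A}

theorem mul_pow_eq_of_mul_eq_add_mul_self (hxy : x * y = y * x + y * y) (n : ℕ) :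
    x * y ^ n = y ^ n * x + n • y ^ (n + 1) := by
  induction n with
  | zero => simp
  | succ n ih =>
    rw [pow_succ, ← mul_assoc, ih, add_mul, mul_assoc, hxy, smul_mul_assoc, mul_add, ← mul_assoc,
      ← mul_assoc, ← pow_succ, ← pow_succ, succ_nsmul]
    abel

theorem add_smul_mul_ascPochhammer_smul_pow_mul_pow (hxy : x * y = y * x + y * y) (p : R)
    (i j : ℕ) :
    (x + p • y) * ((ascPochhammer R i).eval p • (y ^ i * x ^ j)) =
      (ascPochhammer R i).eval p • (y ^ i * x ^ (j + 1)) +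
        (ascPochhammer R (i + 1)).eval p • (y ^ (i + 1) * x ^ j) := by
  have hx : x * (y ^ i * x ^ j) = y ^ i * x ^ (j + 1) + i • (y ^ (i + 1) * x ^ j) := by
    rw [← mul_assoc, mul_pow_eq_of_mul_eq_add_mul_self hxy, add_mul, mul_assoc, ← pow_succ',
      smul_mul_assoc]
  have hy : y * (y ^ i * x ^ j) = y ^ (i + 1) * x ^ j := by rw [← mul_assoc, ← pow_succ']
  rw [add_mul, mul_smul_comm, hx, smul_mul_assoc, mul_smul_comm, hy, ascPochhammer_succ_eval,
    ← Nat.cast_smul_eq_nsmul R]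
  module

theorem add_smul_pow_eq_sum_antidiagonal (hxy : x * y = y * x + y * y) (p : R) (n : ℕ) :
    (x + p • y) ^ n = ∑ ij ∈ antidiagonal n,
      n.choose ij.1 • ((ascPochhammer R ij.1).eval p • (y ^ ij.1 * x ^ ij.2)) := by
  induction n with
  | zero => simp
  | succ n ih =>
    rw [sum_antidiagonal_choose_succ_nsmul
      (fun i j => (ascPochhammer R i).eval p • (y ^ i * x ^ j)) n, pow_succ', ih, mul_sum]
    simp only [mul_smul_comm, add_smul_mul_ascPochhammer_smul_pow_mul_pow hxy, smul_add,
      sum_add_distrib]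
    congr 1
    refine sum_congr rfl fun ⟨i, j⟩ hij => ?_
    rw [n.choose_symm_of_eq_add (mem_antidiagonal.1 hij).symm]

end JordanPlane

/-- In an associative `R`-algebra, if `x * y = y * x + y * y`, then for every
`p : R` and natural number `k`,
`(x + p • y) ^ k = ∑_{i=0}^{k} C(k,i) * (p (p+1) ⋯ (p+i-1)) • (y ^ i * x ^ (k - i))`,
where the rising factorial is `(ascPochhammer R i).eval p`. -/
theorem jordan_plane_binomial_expansion
    (R : Type*) (A : Type*) [CommRing R] [Ring A] [Algebra R A]
    (x y : A) (hxy : x * y = y * x + y * y) (p : R) (k : ℕ) :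
    (x + p • y) ^ k =
      ∑ i ∈ Finset.range (k + 1),
        ((k.choose i : R) * (ascPochhammer R i).eval p) • (y ^ i * x ^ (k - i)) := by
  rw [add_smul_pow_eq_sum_antidiagonal hxy, Nat.sum_antidiagonal_eq_sum_range_succ
    (fun i j => k.choose i • ((ascPochhammer R i).eval p • (y ^ i * x ^ j)))]
  simp only [mul_smul, Nat.cast_smul_eq_nsmul]
end

section
/- Let R be a commutative ring, let A be an associative R-algebra, and let x, y ∈ A satisfy x·y = y·x + y·y. Then for every p ∈ R and every natural number k, the ordered product ∏_{i=0}^{k−1} (x + (p − k + 1 + 2i)•y) (factors multiplied in order of increasing i from left to right) equals Σ_{i=0}^{k} C(k,i)·(p·(p+1)·…·(p+i−1))•(y^i · x^{k−i}), where C(k,i) is the binomial coefficient and p·(p+1)·…·(p+i−1) denotes the rising factorial in R (equal to 1 when i = 0). -/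
/-!
Peeling off the first factor turns the product for `(p, k + 1)` into `(x + (p - k) • y)` times
the product for `(p + 1, k)`. From `x * y ^ i = y ^ i * x + i • y ^ (i + 1)`, left multiplication
by `x + c • y` sends `y ^ i * x ^ j` to `y ^ i * x ^ (j + 1) + (c + i) • (y ^ (i + 1) * x ^ j)`,
so the induction closes by a Pascal-type recursion for `C(k, i) * p (p + 1) ⋯ (p + i - 1)`.
-/

open Finset

theorem cast_choose_succ_mul_ascPochhammer_eval {R : Type*} [CommRing R] (k i : ℕ) (p : R) :
    ((k + 1).choose (i + 1) : R) * (ascPochhammer R (i + 1)).eval p =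
      (k.choose (i + 1) : R) * (ascPochhammer R (i + 1)).eval (p + 1) +
        (p - k + i) * ((k.choose i : R) * (ascPochhammer R i).eval (p + 1)) := by
  have hchoose : ((i + 1) * k.choose (i + 1) : R) = (k - i) * k.choose i := by
    rcases le_or_gt i k with hik | hki
    · have h := congrArg (Nat.cast : ℕ → R) (Nat.choose_succ_right_eq k i)
      push_cast [Nat.cast_sub hik] at h
      linear_combination h
    · simp [Nat.choose_eq_zero_of_lt hki, Nat.choose_eq_zero_of_lt (hki.trans (lt_add_one i))]
  have hp : (ascPochhammer R (i + 1)).eval p = p * (ascPochhammer R i).eval (p + 1) := by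
    simp [ascPochhammer_succ_left]
  rw [hp, ascPochhammer_succ_eval, Nat.choose_succ_succ', Nat.cast_add]
  linear_combination (-(ascPochhammer R i).eval (p + 1)) * hchoose

namespace JordanPlane

section Semiring

variable {R A : Type*} [CommSemiring R] [Semiring A] [Algebra R A] {x y : A}

theorem mul_pow (hxy : x * y = y * x + y * y) (i : ℕ) :
    x * y ^ i = y ^ i * x + i • y ^ (i + 1) := by
  induction i with
  | zero => simp
  | succ i ih =>
    calc x * y ^ (i + 1) = (x * y ^ i) * y := by rw [pow_succ, mul_assoc]
      _ = y ^ i * (x * y) + i • y ^ (i + 2) := by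
        rw [ih, add_mul, mul_assoc, smul_mul_assoc, ← pow_succ]
      _ = y ^ (i + 1) * x + (i + 1) • y ^ (i + 2) := by
        rw [hxy, mul_add, ← mul_assoc, ← mul_assoc, ← pow_succ, ← pow_succ, add_nsmul, one_nsmul]
        abel

theorem add_smul_mul_pow_mul_pow (hxy : x * y = y * x + y * y) (c : R) (i j : ℕ) :
    (x + c • y) * (y ^ i * x ^ j) = y ^ i * x ^ (j + 1) + (c + i) • (y ^ (i + 1) * x ^ j) := by
  rw [add_mul, ← mul_assoc, mul_pow hxy, add_mul, mul_assoc, ← pow_succ', smul_mul_assoc,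
    smul_mul_assoc, ← mul_assoc, ← pow_succ', add_smul, Nat.cast_smul_eq_nsmul]
  abel

theorem mul_sum_antidiagonal (hxy : x * y = y * x + y * y) (c : R) (a : ℕ → R) (n : ℕ) :
    (x + c • y) * ∑ ij ∈ antidiagonal n, a ij.1 • (y ^ ij.1 * x ^ ij.2) =
      ∑ ij ∈ antidiagonal n, a ij.1 • (y ^ ij.1 * x ^ (ij.2 + 1)) +
        ∑ ij ∈ antidiagonal n, ((c + ij.1) * a ij.1) • (y ^ (ij.1 + 1) * x ^ ij.2) := by
  simp only [mul_sum, mul_smul_comm, add_smul_mul_pow_mul_pow hxy, smul_add, smul_smul,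
    mul_comm (a _), sum_add_distrib]

end Semiring

theorem add_smul_mul_binomial_sum {R A : Type*} [CommRing R] [Semiring A] [Algebra R A]
    {x y : A} (hxy : x * y = y * x + y * y) (p : R) (k : ℕ) :
    (x + (p - k) • y) * ∑ ij ∈ antidiagonal k,
        ((k.choose ij.1 : R) * (ascPochhammer R ij.1).eval (p + 1)) • (y ^ ij.1 * x ^ ij.2) =
      ∑ ij ∈ antidiagonal (k + 1),
        (((k + 1).choose ij.1 : R) * (ascPochhammer R ij.1).eval p) • (y ^ ij.1 * x ^ ij.2) := by
  let a : ℕ → R := fun i => (k.choose i : R) * (ascPochhammer R i).eval (p + 1)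
  -- the term `a (k + 1) • y ^ (k + 1)` produced by the reindexing vanishes as `C(k, k + 1) = 0`
  have hshift : ∑ ij ∈ antidiagonal k, a ij.1 • (y ^ ij.1 * x ^ (ij.2 + 1)) =
      a 0 • x ^ (k + 1) + ∑ ij ∈ antidiagonal k, a (ij.1 + 1) • (y ^ (ij.1 + 1) * x ^ ij.2) := by
    have h := (Nat.sum_antidiagonal_succ' (n := k)
      (f := fun ij => a ij.1 • (y ^ ij.1 * x ^ ij.2))).symm.trans
      (Nat.sum_antidiagonal_succ (f := fun ij => a ij.1 • (y ^ ij.1 * x ^ ij.2)))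
    simpa [a] using h
  rw [mul_sum_antidiagonal hxy _ a, hshift, Nat.sum_antidiagonal_succ, add_assoc,
    ← sum_add_distrib]
  congr 1
  · simp [a]
  · refine sum_congr rfl fun ij _ => ?_
    rw [← add_smul, cast_choose_succ_mul_ascPochhammer_eval]

end JordanPlane

/-- In an associative `R`-algebra, if `x * y = y * x + y * y`, then for every
`p : R` and natural number `k`, the ordered product
`∏_{i=0}^{k-1} (x + (p - k + 1 + 2 i) • y)` (factors multiplied from left to
right in order of increasing `i`) equals
`∑_{i=0}^{k} C(k,i) * (p (p+1) ⋯ (p+i-1)) • (y ^ i * x ^ (k - i))`. -/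
theorem jordan_plane_ordered_product_eq_binomial_expansion
    (R : Type*) (A : Type*) [CommRing R] [Ring A] [Algebra R A]
    (x y : A) (hxy : x * y = y * x + y * y) (p : R) (k : ℕ) :
    ((List.range k).map
        (fun (i : ℕ) => x + (p - (k : R) + 1 + 2 * (i : R)) • y)).prod =
      ∑ i ∈ Finset.range (k + 1),
        ((k.choose i : R) * (ascPochhammer R i).eval p) • (y ^ i * x ^ (k - i)) := by
  rw [← Nat.sum_antidiagonal_eq_sum_range_succ
    (fun i j => ((k.choose i : R) * (ascPochhammer R i).eval p) • (y ^ i * x ^ j))]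
  induction k generalizing p with
  | zero => simp
  | succ k ih =>
    have hshift : ∀ i : ℕ, p - ((k + 1 : ℕ) : R) + 1 + 2 * ((i + 1 : ℕ) : R) =
        p + 1 - k + 1 + 2 * (i : R) := fun i => by push_cast; ring
    rw [List.range_succ_eq_map, List.map_cons, List.prod_cons, List.map_map]
    simp only [Function.comp_def, Nat.succ_eq_add_one, hshift, ih]
    convert JordanPlane.add_smul_mul_binomial_sum hxy p k using 4
    push_cast
    ring
end

section
/- Let A^J be the Jordan plane over ℂ, and let X, Y ∈ A^J denote the images of the two generators, so that X·Y = Y·X + Y·Y in A^J. Then for every complex number p and every natural number k, (X + p•Y)^k = (X + (p−k+1)•Y)·(X + (p−k+3)•Y)· … ·(X + (p+k−1)•Y), i.e., (X + p•Y)^k = ∏_{i=0}^{k−1} (X + (p − k + 1 + 2i)•Y), with factors multiplied in order of increasing i from left to right. -/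
open FreeAlgebra

/-- The free associative ℂ-algebra on two generators. -/
abbrev FreeTwo : Type := FreeAlgebra ℂ (Fin 2)

/-- The defining relation of the Jordan plane: `x * y = y * x + y * y`. -/
def jordanRel : FreeTwo → FreeTwo → Prop :=
  fun a b => a = ι ℂ 0 * ι ℂ 1 ∧ b = ι ℂ 1 * ι ℂ 0 + ι ℂ 1 * ι ℂ 1

/-- The Jordan plane `ℂ⟨x,y⟩/(xy - yx - y²)`. -/
abbrev JordanPlane : Type := RingQuot jordanRel

/-- The image `X` of the generator `x` in the Jordan plane. -/
noncomputable def JX : JordanPlane := RingQuot.mkAlgHom ℂ jordanRel (ι ℂ 0)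

/-- The image `Y` of the generator `y` in the Jordan plane. -/
noncomputable def JY : JordanPlane := RingQuot.mkAlgHom ℂ jordanRel (ι ℂ 1)

/-!
Write `F c = X + c • Y`. The relation `X Y = Y X + Y²` gives the exchange rule
`F a * F b = F (b - 1) * F (a + 1)`. Pushing one factor `F p` to the right through a product
of `k` factors lowers each of them by `1` and raises `F p` to `F (p + k)`; by induction on `k`
this turns `F p * ∏ F (p - k + 1 + 2 i)` into `∏ F (p - k + 2 i) * F (p + k)`, which is the
ordered product for `k + 1`.
-/

section ExchangeRelation

variable {R A : Type*} [CommRing R] [Ring A] [Algebra R A] {X Y : A}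

theorem add_smul_mul_add_smul_eq (h : X * Y = Y * X + Y * Y) (a b : R) :
    (X + a • Y) * (X + b • Y) = (X + (b - 1) • Y) * (X + (a + 1) • Y) := by
  simp only [add_mul, mul_add, smul_mul_assoc, mul_smul_comm, h]
  module

theorem add_smul_mul_prod_range (h : X * Y = Y * X + Y * Y) (f : ℕ → R) (a : R) (k : ℕ) :
    (X + a • Y) * ((List.range k).map fun i => X + f i • Y).prod =
      ((List.range k).map fun i => X + (f i - 1) • Y).prod * (X + (a + k) • Y) := by
  induction k with
  | zero => simp
  | succ k ih =>
    simp only [List.range_succ, List.map_append, List.prod_append, List.map_singleton,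
      List.prod_singleton, ← mul_assoc, ih]
    rw [mul_assoc _ (X + (a + k) • Y), add_smul_mul_add_smul_eq h, ← mul_assoc,
      Nat.cast_succ, add_assoc]

theorem add_smul_pow_eq_prod_range (h : X * Y = Y * X + Y * Y) (p : R) (k : ℕ) :
    (X + p • Y) ^ k =
      ((List.range k).map fun i : ℕ => X + (p - (k : R) + 1 + 2 * (i : R)) • Y).prod := by
  induction k with
  | zero => simp
  | succ k ih =>
    rw [pow_succ', ih, add_smul_mul_prod_range h, List.range_succ, List.map_append,
      List.prod_append, List.map_singleton, List.prod_singleton]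
    push_cast
    ring_nf

end ExchangeRelation

/-- In the Jordan plane (where `X * Y = Y * X + Y * Y`), for every `p : ℂ` and
natural number `k`,
`(X + p • Y) ^ k = ∏_{i=0}^{k-1} (X + (p - k + 1 + 2 i) • Y)` with factors
multiplied from left to right in order of increasing `i`. -/
theorem jordanPlane_ordered_product_identity
    (hXY : JX * JY = JY * JX + JY * JY) (p : ℂ) (k : ℕ) :
    (JX + p • JY) ^ k =
      ((List.range k).map
        (fun (i : ℕ) => JX + (p - (k : ℂ) + 1 + 2 * (i : ℂ)) • JY)).prod :=
  add_smul_pow_eq_prod_range hXY p k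
end

section
/- Let A^J be the Jordan plane over ℂ with X, Y the images of the two generators. Then the family of monomials (i, j) ↦ Y^i · X^j, indexed by pairs of natural numbers (i, j), is a basis of A^J as a ℂ-vector space. In particular, for every natural number r, the r-th homogeneous component of A^J (the image in A^J of the span of all products of exactly r generators of the free algebra) has ℂ-dimension r + 1, so A^J has polynomial growth. -/
/-!
The relation `X Y = Y X + Y²` gives `X Y^i = Y^i X + i Y^(i+1)`, so left multiplication by `X`
and `Y` carries the span of the ordered monomials `Y^i X^j` with `i + j = r` onto the span of
those with `i + j = r + 1`. As `X` and `Y` generate the algebra, the ordered monomials span it,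
and the image of the degree-`r` part of the free algebra is spanned by the `r + 1` ordered
monomials of degree `r`. They are linearly independent because the Jordan plane acts on
`ℂ[x, y]` by `Y ↦ y ·` and `X ↦ x · + y² ∂_y`, and acting on `1` sends `Y^i X^j` to `y^i x^j`.
-/

open FreeAlgebra

/-- The ℂ-span of the generators of the free algebra; its `r`-th power is the
span of all products of exactly `r` generators. -/
noncomputable def gens : Submodule ℂ FreeTwo :=
  Submodule.span ℂ (Set.range (ι ℂ : Fin 2 → FreeTwo))

section Semiring

variable {A : Type*} [Semiring A] {x y : A}

theorem mul_pow_eq_of_mul_eq_mul_add_mul_self (h : x * y = y * x + y * y) (i : ℕ) :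
    x * y ^ i = y ^ i * x + i • y ^ (i + 1) := by
  induction i with
  | zero => simp
  | succ i ih =>
    calc x * y ^ (i + 1) = (y ^ i * x + i • y ^ (i + 1)) * y := by rw [← ih, pow_succ, mul_assoc]
      _ = y ^ i * (x * y) + i • y ^ (i + 2) := by
        rw [add_mul, mul_assoc, smul_mul_assoc, ← pow_succ]
      _ = y ^ (i + 1) * x + (i + 1) • y ^ (i + 2) := by
        rw [h, mul_add, ← mul_assoc, ← mul_assoc, ← pow_succ, ← pow_succ, succ_nsmul',
          add_assoc]

theorem Submodule.eq_top_of_span_mul_le {R : Type*} [CommSemiring R] [Algebra R A] {s : Set A}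
    (hs : Algebra.adjoin R s = ⊤) {M : Submodule R A} (h1 : 1 ∈ M)
    (hM : Submodule.span R s * M ≤ M) : M = ⊤ := by
  suffices h : ∀ a ∈ Algebra.adjoin R s, ∀ m ∈ M, a * m ∈ M by
    refine eq_top_iff.mpr fun a _ => mul_one a ▸ h a (hs ▸ Algebra.mem_top) 1 h1
  intro a ha
  induction ha using Algebra.adjoin_induction with
  | mem x hx => exact fun m hm => hM (Submodule.mul_mem_mul (Submodule.subset_span hx) hm)
  | algebraMap r => exact fun m hm => by rw [← Algebra.smul_def]; exact M.smul_mem r hm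
  | add x y _ _ hx hy => exact fun m hm => by rw [add_mul]; exact add_mem (hx m hm) (hy m hm)
  | mul x y _ _ hx hy => exact fun m hm => by rw [mul_assoc]; exact hx _ (hy m hm)

end Semiring

section JordanPlane

open Finset

theorem JX_mul_JY : JX * JY = JY * JX + JY * JY := by
  simpa only [JX, JY, map_mul, map_add] using
    RingQuot.mkAlgHom_rel ℂ (s := jordanRel) (⟨rfl, rfl⟩ : jordanRel (ι ℂ 0 * ι ℂ 1) _)

noncomputable def jordanMonomial (p : ℕ × ℕ) : JordanPlane := JY ^ p.1 * JX ^ p.2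

theorem JX_mul_jordanMonomial (i j : ℕ) :
    JX * jordanMonomial (i, j) = jordanMonomial (i, j + 1) + i • jordanMonomial (i + 1, j) := by
  simp only [jordanMonomial]
  rw [← mul_assoc, mul_pow_eq_of_mul_eq_mul_add_mul_self JX_mul_JY, add_mul, smul_mul_assoc,
    mul_assoc, ← pow_succ']

theorem JY_mul_jordanMonomial (i j : ℕ) :
    JY * jordanMonomial (i, j) = jordanMonomial (i + 1, j) := by
  simp only [jordanMonomial]
  rw [← mul_assoc, ← pow_succ']

noncomputable def jordanDegreeSpan (r : ℕ) : Submodule ℂ JordanPlane :=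
  Submodule.span ℂ (jordanMonomial '' (antidiagonal r : Set (ℕ × ℕ)))

theorem jordanMonomial_mem_jordanDegreeSpan {i j r : ℕ} (h : i + j = r) :
    jordanMonomial (i, j) ∈ jordanDegreeSpan r :=
  Submodule.subset_span ⟨(i, j), mem_antidiagonal.mpr h, rfl⟩

theorem span_JX_JY_mul_jordanDegreeSpan (r : ℕ) :
    Submodule.span ℂ {JX, JY} * jordanDegreeSpan r = jordanDegreeSpan (r + 1) := by
  rw [jordanDegreeSpan, Submodule.span_mul_span]
  apply le_antisymm
  · rw [Submodule.span_le]
    rintro _ ⟨a, ha, _, ⟨⟨i, j⟩, hij, rfl⟩, rfl⟩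
    replace hij : i + j = r := mem_antidiagonal.mp hij
    rcases ha with rfl | rfl <;> dsimp only
    · rw [JX_mul_jordanMonomial]
      exact add_mem (jordanMonomial_mem_jordanDegreeSpan (by omega))
        (Submodule.smul_of_tower_mem _ _ (jordanMonomial_mem_jordanDegreeSpan (by omega)))
    · rw [JY_mul_jordanMonomial]
      exact jordanMonomial_mem_jordanDegreeSpan (by omega)
  · rw [jordanDegreeSpan, Submodule.span_le]
    rintro _ ⟨⟨i, j⟩, hij, rfl⟩
    replace hij : i + j = r + 1 := mem_antidiagonal.mp hij
    refine Submodule.subset_span ?_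
    cases i with
    | zero =>
      refine ⟨JX, Or.inl rfl, jordanMonomial (0, r), ⟨(0, r), by simp, rfl⟩, ?_⟩
      dsimp only
      rw [JX_mul_jordanMonomial, zero_smul, add_zero, show r + 1 = j by omega]
    | succ i =>
      exact ⟨JY, Or.inr rfl, jordanMonomial (i, j), ⟨(i, j), by simp; omega, rfl⟩,
        JY_mul_jordanMonomial i j⟩

theorem mkAlgHom_image_range_ι :
    RingQuot.mkAlgHom ℂ jordanRel '' Set.range (ι ℂ) = {JX, JY} := by
  ext
  simp [Fin.exists_fin_two, JX, JY, eq_comm]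

theorem map_mkAlgHom_gens :
    gens.map (RingQuot.mkAlgHom ℂ jordanRel).toLinearMap = Submodule.span ℂ {JX, JY} := by
  rw [gens, Submodule.map_span, AlgHom.coe_toLinearMap, mkAlgHom_image_range_ι]

theorem map_mkAlgHom_gens_pow (r : ℕ) :
    (gens ^ r).map (RingQuot.mkAlgHom ℂ jordanRel).toLinearMap = jordanDegreeSpan r := by
  induction r with
  | zero =>
    rw [pow_zero, Submodule.map_one, Submodule.one_eq_span]
    simp [jordanDegreeSpan, jordanMonomial]
  | succ r ih =>
    rw [pow_succ', Submodule.map_mul, ih, map_mkAlgHom_gens, span_JX_JY_mul_jordanDegreeSpan]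

end JordanPlane

theorem adjoin_JX_JY_eq_top : Algebra.adjoin ℂ {JX, JY} = ⊤ := by
  rw [← mkAlgHom_image_range_ι, ← AlgHom.map_adjoin, FreeAlgebra.adjoin_range_ι, Algebra.map_top,
    AlgHom.range_eq_top]
  exact RingQuot.mkAlgHom_surjective ℂ jordanRel

theorem iSup_jordanDegreeSpan_eq_top : ⨆ r, jordanDegreeSpan r = ⊤ := by
  have h1 : (1 : JordanPlane) ∈ jordanDegreeSpan 0 := by
    simpa [jordanMonomial] using jordanMonomial_mem_jordanDegreeSpan (i := 0) (j := 0) rfl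
  refine Submodule.eq_top_of_span_mul_le adjoin_JX_JY_eq_top (Submodule.mem_iSup_of_mem 0 h1) ?_
  rw [Submodule.mul_iSup]
  exact iSup_le fun r => (span_JX_JY_mul_jordanDegreeSpan r).le.trans (le_iSup _ (r + 1))

theorem span_range_jordanMonomial_eq_top : Submodule.span ℂ (Set.range jordanMonomial) = ⊤ :=
  top_le_iff.mp <| iSup_jordanDegreeSpan_eq_top ▸ iSup_le fun _ =>
    Submodule.span_mono (Set.image_subset_range _ _)

section Representation

open Polynomial

variable (R : Type*) [CommSemiring R]

-- `R[X][X]` stands for `R[x][y]`: the outer variable is `y` and `C X` is `x`.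
noncomputable def jordanXOp : Module.End R R[X][X] :=
  LinearMap.mulLeft R (C X) + LinearMap.mulLeft R (X ^ 2) ∘ₗ derivative.restrictScalars R

noncomputable def jordanYOp : Module.End R R[X][X] := LinearMap.mulLeft R X

variable {R}

theorem jordanXOp_apply (p : R[X][X]) : jordanXOp R p = C X * p + X ^ 2 * derivative p := rfl

theorem jordanYOp_apply (p : R[X][X]) : jordanYOp R p = X * p := rfl

theorem jordanXOp_mul_jordanYOp :
    jordanXOp R * jordanYOp R = jordanYOp R * jordanXOp R + jordanYOp R * jordanYOp R := by
  ext1 p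
  simp only [Module.End.mul_apply, LinearMap.add_apply, jordanXOp_apply, jordanYOp_apply,
    derivative_mul, derivative_X]
  ring

theorem jordanXOp_pow_apply_one (j : ℕ) : (jordanXOp R ^ j) 1 = C (X ^ j) := by
  induction j with
  | zero => simp
  | succ j ih =>
    rw [pow_succ', Module.End.mul_apply, ih, jordanXOp_apply, derivative_C, mul_zero, add_zero,
      ← C_mul, ← pow_succ']

theorem jordanYOp_pow_apply (i : ℕ) (p : R[X][X]) : (jordanYOp R ^ i) p = X ^ i * p := by
  induction i with
  | zero => simp
  | succ i ih => rw [pow_succ', Module.End.mul_apply, ih, jordanYOp_apply, pow_succ', mul_assoc]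

theorem linearIndependent_X_pow_mul_C_X_pow :
    LinearIndependent R fun p : ℕ × ℕ => (X : R[X][X]) ^ p.1 * C (X ^ p.2) := by
  convert ((basisMonomials R).smulTower (basisMonomials R[X])).linearIndependent.comp
    Prod.swap Prod.swap_injective using 1
  ext1 p
  simp [smul_eq_C_mul, ← C_mul_X_pow_eq_monomial, mul_comm]

noncomputable def jordanRep : JordanPlane →ₐ[ℂ] Module.End ℂ ℂ[X][X] :=
  RingQuot.liftAlgHom ℂ ⟨FreeAlgebra.lift ℂ ![jordanXOp ℂ, jordanYOp ℂ], by
    rintro _ _ ⟨rfl, rfl⟩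
    simpa using jordanXOp_mul_jordanYOp⟩

theorem jordanRep_jordanMonomial_apply_one (p : ℕ × ℕ) :
    jordanRep (jordanMonomial p) 1 = X ^ p.1 * C (X ^ p.2) := by
  have hX : jordanRep JX = jordanXOp ℂ := by simp [jordanRep, JX]
  have hY : jordanRep JY = jordanYOp ℂ := by simp [jordanRep, JY]
  rw [jordanMonomial, map_mul, map_pow, map_pow, hX, hY, Module.End.mul_apply,
    jordanXOp_pow_apply_one, jordanYOp_pow_apply]

theorem linearIndependent_jordanMonomial : LinearIndependent ℂ jordanMonomial := by
  refine LinearIndependent.of_comp (LinearMap.applyₗ 1 ∘ₗ jordanRep.toLinearMap) ?_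
  have h : (LinearMap.applyₗ 1 ∘ₗ jordanRep.toLinearMap) ∘ jordanMonomial =
      fun p : ℕ × ℕ => (X : ℂ[X][X]) ^ p.1 * C (X ^ p.2) :=
    funext jordanRep_jordanMonomial_apply_one
  exact h ▸ linearIndependent_X_pow_mul_C_X_pow

end Representation

theorem finrank_jordanDegreeSpan (r : ℕ) : Module.finrank ℂ (jordanDegreeSpan r) = r + 1 := by
  rw [jordanDegreeSpan, Set.image_eq_range]
  exact (finrank_span_eq_card
    (linearIndependent_jordanMonomial.comp _ Subtype.val_injective)).trans (by simp)

noncomputable def jordanBasis : Module.Basis (ℕ × ℕ) ℂ JordanPlane :=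
  .mk linearIndependent_jordanMonomial span_range_jordanMonomial_eq_top.ge

/-- The monomials `Y^i * X^j` form a ℂ-basis of the Jordan plane, and
the image in the Jordan plane of the degree-`r` homogeneous component of the
free algebra has dimension `r + 1`: the Jordan plane has polynomial growth. -/
theorem jordanPlane_basis_and_polynomial_growth :
    (∃ b : Module.Basis (ℕ × ℕ) ℂ JordanPlane, ∀ i j : ℕ, b (i, j) = JY ^ i * JX ^ j) ∧
    ∀ r : ℕ,
      Module.finrank ℂ
        (Submodule.map (RingQuot.mkAlgHom ℂ jordanRel).toLinearMap (gens ^ r))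
        = r + 1 :=
  ⟨⟨jordanBasis, fun i j => Module.Basis.mk_apply _ _ (i, j)⟩,
    fun r => map_mkAlgHom_gens_pow r ▸ finrank_jordanDegreeSpan r⟩
end

section
/- For every nonzero complex number q, the Jordan plane A^J is not isomorphic as a ℂ-algebra to the quantum plane A_q with parameter q; that is, there is no ℂ-algebra isomorphism A^J ≃ A_q. -/
open FreeAlgebra

/-- The defining relation of the quantum plane with parameter `q`:
`x * y = q • (y * x)`. -/
def quantumRel (q : ℂ) : FreeTwo → FreeTwo → Prop :=
  fun a b => a = ι ℂ 0 * ι ℂ 1 ∧ b = q • (ι ℂ 1 * ι ℂ 0)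

/-- The quantum plane `ℂ⟨x,y⟩/(xy - q·yx)`. -/
abbrev QuantumPlane (q : ℂ) : Type := RingQuot (quantumRel q)

/-!
Map the quantum plane to the commutative reduced algebra `ℂ[X] × ℂ[X]` by `x ↦ (X, 0)`,
`y ↦ (0, X)`; the relation holds since both sides vanish. In a commutative
algebra the Jordan relation reads `y² = 0`, so any map from the Jordan plane to a reduced one
kills `y`, and its image is generated by the single element `a`, the image of `x`. An isomorphism
would thus put `(X, 0)` and `(0, X)` in `ℂ[a]`, which is impossible: `Q(a₂) = X` forces `a₂` to be
nonconstant, so `P(a₂) = 0` forces `P = 0`, contradicting `P(a₁) = X`.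
-/

open Polynomial

namespace JordanPlane

noncomputable def x : JordanPlane := RingQuot.mkAlgHom ℂ jordanRel (ι ℂ 0)

noncomputable def y : JordanPlane := RingQuot.mkAlgHom ℂ jordanRel (ι ℂ 1)

theorem x_mul_y : x * y = y * x + y * y := by
  simp only [x, y, ← map_mul, ← map_add]
  exact RingQuot.mkAlgHom_rel ℂ ⟨rfl, rfl⟩

theorem algHom_ext {A : Type*} [Semiring A] [Algebra ℂ A] {f g : JordanPlane →ₐ[ℂ] A}
    (hx : f x = g x) (hy : f y = g y) : f = g := by
  refine RingQuot.ringQuot_ext' _ _ _ (FreeAlgebra.hom_ext (funext fun i => ?_))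
  fin_cases i
  exacts [hx, hy]

theorem map_y_eq_zero {R : Type*} [CommRing R] [IsReduced R] [Algebra ℂ R]
    (f : JordanPlane →ₐ[ℂ] R) : f y = 0 := by
  have h := congrArg f x_mul_y
  simp only [map_mul, map_add, mul_comm (f y) (f x), left_eq_add] at h
  exact IsReduced.eq_zero _ ⟨2, by rw [sq, h]⟩

noncomputable def toPolynomial : JordanPlane →ₐ[ℂ] ℂ[X] :=
  RingQuot.liftAlgHom ℂ ⟨FreeAlgebra.lift ℂ ![X, 0], by
    rintro _ _ ⟨rfl, rfl⟩
    simp⟩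

@[simp]
theorem toPolynomial_x : toPolynomial x = X := by
  simp [toPolynomial, x]

@[simp]
theorem toPolynomial_y : toPolynomial y = 0 := by
  simp [toPolynomial, y]

theorem algHom_eq_aeval_comp_toPolynomial {R : Type*} [CommRing R] [IsReduced R] [Algebra ℂ R]
    (f : JordanPlane →ₐ[ℂ] R) : f = (aeval (f x)).comp toPolynomial := by
  apply algHom_ext <;> simp [map_y_eq_zero]

theorem range_le_range_aeval {R : Type*} [CommRing R] [IsReduced R] [Algebra ℂ R]
    (f : JordanPlane →ₐ[ℂ] R) : f.range ≤ (aeval (f x)).range := by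
  conv_lhs => rw [algHom_eq_aeval_comp_toPolynomial f]
  exact AlgHom.range_comp_le_range _ _

end JordanPlane

namespace QuantumPlane

noncomputable def x (q : ℂ) : QuantumPlane q := RingQuot.mkAlgHom ℂ (quantumRel q) (ι ℂ 0)

noncomputable def y (q : ℂ) : QuantumPlane q := RingQuot.mkAlgHom ℂ (quantumRel q) (ι ℂ 1)

noncomputable def toProd (q : ℂ) : QuantumPlane q →ₐ[ℂ] ℂ[X] × ℂ[X] :=
  RingQuot.liftAlgHom ℂ ⟨FreeAlgebra.lift ℂ ![(X, 0), (0, X)], by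
    rintro _ _ ⟨rfl, rfl⟩
    simp⟩

@[simp]
theorem toProd_x (q : ℂ) : toProd q (x q) = (X, 0) := by
  simp [toProd, x]

@[simp]
theorem toProd_y (q : ℂ) : toProd q (y q) = (0, X) := by
  simp [toProd, y]

end QuantumPlane

theorem Polynomial.zero_X_notMem_range_aeval_of_X_zero_mem {K : Type*} [CommRing K]
    [IsDomain K] {a : K[X] × K[X]} (hX0 : (X, 0) ∈ (aeval (R := K) a).range) :
    (0, X) ∉ (aeval (R := K) a).range := by
  intro h0X
  obtain ⟨P, hP⟩ := (AlgHom.mem_range _).mp hX0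
  obtain ⟨Q, hQ⟩ := (AlgHom.mem_range _).mp h0X
  simp only [aeval_prod_apply, Prod.ext_iff, ← comp_eq_aeval] at hP hQ
  have ha₂ : a.2 ≠ C (a.2.coeff 0) := fun h => X_ne_C _ (by rw [← hQ.2, h, comp_C])
  have hP₀ : P = 0 := by simpa [comp_eq_zero_iff, ha₂] using hP.2
  exact X_ne_zero (R := K) (by simpa [hP₀] using hP.1.symm)

theorem jordanPlane_not_iso_quantumPlane_general (q : ℂ) :
    ¬ Nonempty (JordanPlane ≃ₐ[ℂ] QuantumPlane q) := by
  rintro ⟨e⟩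
  set ψ := (QuantumPlane.toProd q).comp e.toAlgHom
  have hψ (u : QuantumPlane q) : QuantumPlane.toProd q u ∈ ψ.range := ⟨e.symm u, by simp [ψ]⟩
  have hx := JordanPlane.range_le_range_aeval ψ (QuantumPlane.toProd_x q ▸ hψ _)
  have hy := JordanPlane.range_le_range_aeval ψ (QuantumPlane.toProd_y q ▸ hψ _)
  exact Polynomial.zero_X_notMem_range_aeval_of_X_zero_mem hx hy

/-- For every nonzero `q : ℂ`, the Jordan plane is not isomorphic as a
ℂ-algebra to the quantum plane with parameter `q`. -/
theorem jordanPlane_not_iso_quantumPlane (q : ℂ) (hq : q ≠ 0) :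
    ¬ Nonempty (JordanPlane ≃ₐ[ℂ] QuantumPlane q) :=
  jordanPlane_not_iso_quantumPlane_general q
end
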